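/- arXiv:2306.10837 — 2 statements merged into one kernel-verified Lean document; each statement's English description precedes it below -/
import Mathlib

section
/- Let R be the curvature tensor R(α,β̄,γ,δ̄) = c·α_n β̄_n γ_n δ̄_n + t(τ(α,β̄)τ(γ,δ̄) + τ(α,δ̄)τ(γ,β̄)) - α_n β̄_n τ(γ,δ̄) - α_n δ̄_n τ(γ,β̄) - γ_n β̄_n τ(α,δ̄) - γ_n δ̄_n τ(α,β̄) on ℂⁿ, and let v_j = (δ_{1j}/√t, ..., δ_{n-1,j}/√t, δ_{nj}) for j = 1,...,n be the orthonormal frame with respect to the metric with |ξ_j|² = t (j < n), |ξ_n|² = 1. Then the Ricci trace Σ_{j=1}^{n} R(α, β̄, v_j, v̄_j) equals c·α_n β̄_n + (n-1)τ(α,β̄) - (n-1)α_n β̄_n / t. -/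
/-- The truncated form `τ(α,β̄) = ⟨α,β̄⟩ - α_n β̄_n` on `ℂⁿ` (here `n = m+1`). -/
noncomputable def tauForm (m : ℕ) (α β : Fin (m+1) → ℂ) : ℂ :=
  (∑ j : Fin (m+1), α j * (starRingEnd ℂ) (β j))
    - α (Fin.last m) * (starRingEnd ℂ) (β (Fin.last m))

/-- The curvature tensor of the blowup metric `h_t` at a point of the exceptional
divisor, in the frame `ξ_1, ..., ξ_n`. -/
noncomputable def curvR (m : ℕ) (c t : ℝ) (α β γ δ : Fin (m+1) → ℂ) : ℂ :=
  (c : ℂ) * α (Fin.last m) * (starRingEnd ℂ) (β (Fin.last m))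
      * γ (Fin.last m) * (starRingEnd ℂ) (δ (Fin.last m))
  + (t : ℂ) * (tauForm m α β * tauForm m γ δ + tauForm m α δ * tauForm m γ β)
  - α (Fin.last m) * (starRingEnd ℂ) (β (Fin.last m)) * tauForm m γ δ
  - α (Fin.last m) * (starRingEnd ℂ) (δ (Fin.last m)) * tauForm m γ β
  - γ (Fin.last m) * (starRingEnd ℂ) (β (Fin.last m)) * tauForm m α δ
  - γ (Fin.last m) * (starRingEnd ℂ) (δ (Fin.last m)) * tauForm m α β

/-- The orthonormal frame `v_j = (δ_{1j}/√t, …, δ_{n-1,j}/√t, δ_{nj})`. -/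
noncomputable def vFrame (m : ℕ) (t : ℝ) (j : Fin (m+1)) : Fin (m+1) → ℂ :=
  fun k => if k = j then (if (k : ℕ) < m then ((1/Real.sqrt t : ℝ) : ℂ) else 1) else 0

lemma v_apply_last (m : ℕ) (t : ℝ) (j : Fin (m+2)) :
    vFrame (m+1) t j (Fin.last (m+1)) = if Fin.last (m+1) = j then 1 else 0 := by
  simp [vFrame]

lemma tau_right (m : ℕ) (t : ℝ) (α : Fin (m+2) → ℂ) (j : Fin (m+2)) :
    tauForm (m+1) α (vFrame (m+1) t j)
      = if j = Fin.last (m+1) then 0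
        else α j * ((1/Real.sqrt t : ℝ) : ℂ) := by
  simp only [tauForm, vFrame, apply_ite (starRingEnd ℂ), map_zero, mul_ite, mul_zero,
    Finset.sum_ite_eq' Finset.univ j, Finset.mem_univ, if_true]
  by_cases h : j = Fin.last (m+1)
  · subst h; simp
  · have hj : (j:ℕ) < m+1 := Fin.val_lt_last h
    simp [h, Ne.symm h, hj, Complex.conj_ofReal]

lemma tau_left (m : ℕ) (t : ℝ) (β : Fin (m+2) → ℂ) (j : Fin (m+2)) :
    tauForm (m+1) (vFrame (m+1) t j) β
      = if j = Fin.last (m+1) then 0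
        else ((1/Real.sqrt t : ℝ) : ℂ) * (starRingEnd ℂ) (β j) := by
  simp only [tauForm, vFrame, ite_mul, zero_mul,
    Finset.sum_ite_eq' Finset.univ j, Finset.mem_univ, if_true]
  by_cases h : j = Fin.last (m+1)
  · subst h; simp
  · have hj : (j:ℕ) < m+1 := Fin.val_lt_last h
    simp [h, Ne.symm h, hj]

lemma tau_vv (m : ℕ) (t : ℝ) (ht : 0 < t) (j : Fin (m+2)) :
    tauForm (m+1) (vFrame (m+1) t j) (vFrame (m+1) t j)
      = if j = Fin.last (m+1) then 0 else 1/(t:ℂ) := by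
  rw [tau_right]
  by_cases h : j = Fin.last (m+1)
  · simp [h]
  · have hj : (j:ℕ) < m+1 := Fin.val_lt_last h
    rw [if_neg h, if_neg h]
    have hv : vFrame (m+1) t j j = ((1/Real.sqrt t : ℝ) : ℂ) := by
      simp [vFrame, hj]
    rw [hv, ← Complex.ofReal_mul, div_mul_div_comm, one_mul, Real.mul_self_sqrt ht.le,
      Complex.ofReal_div, Complex.ofReal_one]

/-- For `n = m+2 ≥ 2`, `c ∈ ℝ`, `t > 0`, the Ricci trace `Σ_j R(α,β̄,v_j,v̄_j)`
equals `c·α_n β̄_n + (n-1)τ(α,β̄) - (n-1)α_n β̄_n/t`. -/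
theorem ricci_trace (m : ℕ) (c t : ℝ) (ht : 0 < t) (α β : Fin (m+2) → ℂ) :
    ∑ j : Fin (m+2), curvR (m+1) c t α β (vFrame (m+1) t j) (vFrame (m+1) t j)
      = (c : ℂ) * α (Fin.last (m+1)) * (starRingEnd ℂ) (β (Fin.last (m+1)))
        + ((m+1 : ℕ) : ℂ) * tauForm (m+1) α β
        - ((m+1 : ℕ) : ℂ) * α (Fin.last (m+1)) * (starRingEnd ℂ) (β (Fin.last (m+1)))
            / (t : ℂ) := by
  set x := α (Fin.last (m+1)) * (starRingEnd ℂ) (β (Fin.last (m+1))) with hx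
  have hs : ((1/Real.sqrt t : ℝ) : ℂ) * ((1/Real.sqrt t : ℝ) : ℂ) = 1/(t:ℂ) := by
    rw [← Complex.ofReal_mul, show (1/Real.sqrt t) * (1/Real.sqrt t) = 1/t by
      rw [div_mul_div_comm, one_mul, Real.mul_self_sqrt ht.le]]
    push_cast; ring
  have hcs : ∀ i : Fin (m+1),
      curvR (m+1) c t α β (vFrame (m+1) t i.castSucc) (vFrame (m+1) t i.castSucc)
        = tauForm (m+1) α β + α i.castSucc * (starRingEnd ℂ) (β i.castSucc) - x / t := by
    intro i
    have hne : i.castSucc ≠ Fin.last (m+1) := Fin.castSucc_lt_last i |>.ne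
    rw [curvR, tau_vv _ _ ht, tau_right, tau_left, v_apply_last]
    rw [if_neg hne, if_neg hne, if_neg hne, if_neg (Ne.symm hne)]
    have htne : (t:ℂ) ≠ 0 := by exact_mod_cast ht.ne'
    have hts : (t:ℂ) * (1/(t:ℂ)) = 1 := by field_simp
    simp only [map_zero, mul_zero, zero_mul, sub_zero, zero_sub, add_zero]
    linear_combination (tauForm (m+1) α β + α i.castSucc * (starRingEnd ℂ) (β i.castSucc)) * hts
      + (t:ℂ) * (α i.castSucc * (starRingEnd ℂ) (β i.castSucc)) * hs
  have hlast :
      curvR (m+1) c t α β (vFrame (m+1) t (Fin.last (m+1))) (vFrame (m+1) t (Fin.last (m+1)))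
        = (c:ℂ) * x - tauForm (m+1) α β := by
    rw [curvR, tau_vv _ _ ht, tau_right, tau_left, v_apply_last]
    simp
    ring
  rw [Fin.sum_univ_castSucc, hlast]
  simp only [hcs]
  have hsum : ∑ i : Fin (m+1), α i.castSucc * (starRingEnd ℂ) (β i.castSucc)
      = tauForm (m+1) α β := by
    rw [tauForm, eq_sub_iff_add_eq]
    exact (Fin.sum_univ_castSucc (fun j => α j * (starRingEnd ℂ) (β j))).symm
  rw [Finset.sum_sub_distrib, Finset.sum_add_distrib, hsum, Finset.sum_const,
    Finset.sum_const, Finset.card_univ, Fintype.card_fin]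
  push_cast
  ring
end

section
/- For c ≥ 0 and 0 < t < 1, the holomorphic sectional curvature function H(x) = (c x² + 2t(1-x)² - 4x(1-x))/(t(1-x) + x)² for x ∈ [0,1] satisfies H(1) = c ≥ 0 and H(0) = 2/t > 0, yet H(x_t) < 0 for x_t = 2(1-t)/(c+2t+4) when t is small enough; in particular H changes sign on [0,1] for small t. -/
/-- The holomorphic sectional curvature of the blowup metric at the exceptional
divisor, as a function of `x = |α_n|²` with `τ(α,ᾱ) = 1 - x`:
`H(x) = (c x² + 2t(1-x)² - 4x(1-x))/(t(1-x) + x)²`. -/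
noncomputable def hscFun (c t x : ℝ) : ℝ :=
  (c*x^2 + 2*t*(1-x)^2 - 4*x*(1-x)) / (t*(1-x) + x)^2

/-- For `c ≥ 0` and `0 < t < 1`: `H(1) = c ≥ 0` and `H(0) = 2/t > 0`, yet
`H(x_t) < 0` at `x_t = 2(1-t)/(c+2t+4)` for all small enough `t`; in particular `H`
changes sign on `[0,1]` for small `t`. -/
theorem hsc_changes_sign (c : ℝ) (hc : 0 ≤ c) :
    (∀ t : ℝ, 0 < t → t < 1 →
      hscFun c t 1 = c ∧ hscFun c t 0 = 2/t ∧ 0 < hscFun c t 0) ∧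
    (∃ t₀ > (0:ℝ), ∀ t : ℝ, 0 < t → t < t₀ →
      2*(1-t)/(c + 2*t + 4) ∈ Set.Icc (0:ℝ) 1 ∧
      hscFun c t (2*(1-t)/(c + 2*t + 4)) < 0) := by
  constructor
  · intro t ht ht1
    have htne : t ≠ 0 := ne_of_gt ht
    refine ⟨?_, ?_, ?_⟩
    · simp [hscFun]
    · simp only [hscFun]
      field_simp
      ring
    · have h : hscFun c t 0 = 2/t := by
        simp only [hscFun]; field_simp; ring
      rw [h]
      positivity
  · refine ⟨2/(c+8), by positivity, ?_⟩
    intro t ht htt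
    have hc8 : (0:ℝ) < c + 8 := by linarith
    have h2 : t * (c + 8) < 2 := by
      rw [div_eq_mul_inv] at htt
      calc t * (c+8) < 2 * (c+8)⁻¹ * (c+8) := by
            apply mul_lt_mul_of_pos_right htt hc8
        _ = 2 := by field_simp
    have ht1 : t < 1 := by nlinarith
    have hD : (0:ℝ) < c + 2*t + 4 := by linarith
    set x : ℝ := 2*(1-t)/(c + 2*t + 4) with hxdef
    have hxD : x * (c + 2*t + 4) = 2*(1-t) := by
      rw [hxdef]; field_simp
    have hx0 : 0 ≤ x := by
      apply div_nonneg (by linarith) (le_of_lt hD)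
    have hx1 : x ≤ 1 := by
      rw [hxdef, div_le_one hD]; linarith
    refine ⟨⟨hx0, hx1⟩, ?_⟩
    have hden : 0 < t*(1-x) + x := by nlinarith
    have hnum : c*x^2 + 2*t*(1-x)^2 - 4*x*(1-x) < 0 := by
      nlinarith [mul_pos hD hD, sq_nonneg x, mul_pos ht hD, sq_nonneg (x*(c+2*t+4))]
    exact div_neg_of_neg_of_pos hnum (by positivity)
end
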